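/- Let x, y ∈ ℝ³ satisfy ‖x‖ = 1, ⟨x, y⟩ = 0, and ‖y‖ < √2, and define v = (1 − ‖y‖²/2)·x + √(1 − ‖y‖²/4)·y and w = (1 − ‖y‖²/2)·x − √(1 − ‖y‖²/4)·y. Then ‖v‖ = ‖w‖ = 1, (v + w)·e₁ = (2 − ‖y‖²)·x₁, and v·w = 1 − 2‖y‖² + ‖y‖⁴/2. Consequently, ((v + w)·e₁ = 0 and v·w = −1/2) if and only if (x₁ = 0 and ‖y‖ = 1). -/

import Mathlib

/-!
With `t = ‖y‖²`, both `v` and `w` have the form `a • x ± b • y` with `x ⊥ y`, `a = 1 - t/2`,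
`b = √(1 - t/4)`. By Pythagoras `‖v‖² = ‖w‖² = a² + b² t`, and the coefficients are chosen so that
`(1 - t/2)² + (1 - t/4) t = 1`; likewise `⟪v, w⟫ = a² - b² t = 1 - 2t + t²/2`, while the
`y`-parts cancel in `v + w = 2a • x`. Finally `1 - 2t + t²/2 = -1/2` means `(t - 1)(t - 3) = 0`,
and `t < 2` singles out `t = 1`, for which `2 - t ≠ 0`.
-/

open scoped RealInnerProductSpace

/-- The first standard basis vector `e₁ = (1,0,0)` of `ℝ³`. -/
noncomputable def e₁ : EuclideanSpace ℝ (Fin 3) := !₂[1, 0, 0]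

section

variable {E : Type*} [NormedAddCommGroup E] [InnerProductSpace ℝ E]

lemma inner_smul_add_smul_of_inner_eq_zero {x y : E} (h : ⟪x, y⟫ = 0) (a b c d : ℝ) :
    ⟪a • x + b • y, c • x + d • y⟫ = a * c * ‖x‖ ^ 2 + b * d * ‖y‖ ^ 2 := by
  have h' : ⟪y, x⟫ = 0 := by rw [real_inner_comm, h]
  simp only [inner_add_left, inner_add_right, real_inner_smul_left, real_inner_smul_right,
    real_inner_self_eq_norm_sq, h, h']
  ring

/-- The first component `v` of `Θ_Δ(x, y)`; the second one, `w`, is `thetaDelta x (-y)`. -/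
noncomputable def thetaDelta (x y : E) : E :=
  (1 - ‖y‖ ^ 2 / 2) • x + √(1 - ‖y‖ ^ 2 / 4) • y

lemma thetaDelta_neg (x y : E) :
    thetaDelta x (-y) = (1 - ‖y‖ ^ 2 / 2) • x - √(1 - ‖y‖ ^ 2 / 4) • y := by
  rw [thetaDelta, norm_neg, smul_neg, ← sub_eq_add_neg]

lemma thetaDelta_add_thetaDelta_neg (x y : E) :
    thetaDelta x y + thetaDelta x (-y) = (2 - ‖y‖ ^ 2) • x := by
  rw [thetaDelta_neg, thetaDelta]
  module

variable {x y : E}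

lemma norm_thetaDelta (hx : ‖x‖ = 1) (hxy : ⟪x, y⟫ = 0) (hy : ‖y‖ ≤ 2) :
    ‖thetaDelta x y‖ = 1 := by
  have hsq : (0 : ℝ) ≤ 1 - ‖y‖ ^ 2 / 4 := by nlinarith [norm_nonneg y]
  rw [← pow_eq_one_iff_of_nonneg (norm_nonneg _) two_ne_zero, ← real_inner_self_eq_norm_sq,
    thetaDelta, inner_smul_add_smul_of_inner_eq_zero hxy, hx, Real.mul_self_sqrt hsq]
  ring

lemma inner_thetaDelta_thetaDelta_neg (hx : ‖x‖ = 1) (hxy : ⟪x, y⟫ = 0) (hy : ‖y‖ ≤ 2) :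
    ⟪thetaDelta x y, thetaDelta x (-y)⟫ = 1 - 2 * ‖y‖ ^ 2 + ‖y‖ ^ 4 / 2 := by
  have hsq : (0 : ℝ) ≤ 1 - ‖y‖ ^ 2 / 4 := by nlinarith [norm_nonneg y]
  rw [thetaDelta_neg, sub_eq_add_neg (_ • x), ← neg_smul, thetaDelta,
    inner_smul_add_smul_of_inner_eq_zero hxy, hx, mul_neg, Real.mul_self_sqrt hsq]
  ring

end

lemma inner_e₁ (z : EuclideanSpace ℝ (Fin 3)) : ⟪z, e₁⟫ = z 0 := by
  simp [e₁, PiLp.inner_apply, Fin.sum_univ_three]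

lemma one_sub_two_mul_sq_add_pow_four_div_two_eq_neg_half_iff {r : ℝ} (hr : 0 ≤ r)
    (hr2 : r ^ 2 < 2) : 1 - 2 * r ^ 2 + r ^ 4 / 2 = -(1 / 2) ↔ r = 1 := by
  constructor
  · intro h
    have : (r ^ 2 - 1) * (r ^ 2 - 3) = 0 := by linear_combination 2 * h
    have h1 : r ^ 2 = 1 := by rcases mul_eq_zero.mp this with h | h <;> linarith
    nlinarith
  · rintro rfl
    norm_num

/-- The computation proving Proposition 4.1: for `(x, y)` in the radius-`√2` disk bundle
in `TS²`, the pair `v = (1 − ‖y‖²/2)x + √(1 − ‖y‖²/4)y`,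
`w = (1 − ‖y‖²/2)x − √(1 − ‖y‖²/4)y` consists of unit vectors with
`(v + w)·e₁ = (2 − ‖y‖²)x₁` and `v·w = 1 − 2‖y‖² + ‖y‖⁴/2`; consequently
`(v + w)·e₁ = 0` and `v·w = −1/2` iff `x₁ = 0` and `‖y‖ = 1`. -/
theorem theta_delta_circle_bundle (x y : EuclideanSpace ℝ (Fin 3))
    (hx : ‖x‖ = 1) (hxy : ⟪x, y⟫ = 0) (hy : ‖y‖ < Real.sqrt 2)
    (v w : EuclideanSpace ℝ (Fin 3))
    (hv : v = (1 - ‖y‖ ^ 2 / 2) • x + Real.sqrt (1 - ‖y‖ ^ 2 / 4) • y)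
    (hw : w = (1 - ‖y‖ ^ 2 / 2) • x - Real.sqrt (1 - ‖y‖ ^ 2 / 4) • y) :
    ‖v‖ = 1 ∧ ‖w‖ = 1 ∧
    ⟪v + w, e₁⟫ = (2 - ‖y‖ ^ 2) * x 0 ∧
    ⟪v, w⟫ = 1 - 2 * ‖y‖ ^ 2 + ‖y‖ ^ 4 / 2 ∧
    ((⟪v + w, e₁⟫ = 0 ∧ ⟪v, w⟫ = -(1 / 2)) ↔ (x 0 = 0 ∧ ‖y‖ = 1)) := by
  obtain rfl : v = thetaDelta x y := hv
  obtain rfl : w = thetaDelta x (-y) := hw.trans (thetaDelta_neg x y).symm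
  have hy2 : ‖y‖ ^ 2 < 2 := (Real.lt_sqrt (norm_nonneg y)).mp hy
  have hy_le : ‖y‖ ≤ 2 := by nlinarith [norm_nonneg y]
  have hsum : ⟪thetaDelta x y + thetaDelta x (-y), e₁⟫ = (2 - ‖y‖ ^ 2) * x 0 := by
    rw [thetaDelta_add_thetaDelta_neg, real_inner_smul_left, inner_e₁]
  have hinner := inner_thetaDelta_thetaDelta_neg hx hxy hy_le
  refine ⟨norm_thetaDelta hx hxy hy_le, ?_, hsum, hinner, ?_⟩
  · exact norm_thetaDelta hx (by rw [inner_neg_right, hxy, neg_zero]) (by rwa [norm_neg])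
  · rw [hsum, hinner, mul_eq_zero, or_iff_right (by linarith),
      one_sub_two_mul_sq_add_pow_four_div_two_eq_neg_half_iff (norm_nonneg y) hy2]
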